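/- Let D(z) be a positive semidefinite matrix field, Q(z) a skew-symmetric matrix field, and H(z) a smooth Hamiltonian. Define the drift f(z) = -(D(z)+Q(z))∇H(z) + τ(z), where τ_i(z) = Σ_j ∂/∂z_j (D_ij(z) + Q_ij(z)). Then the probability density p_s(z) ∝ exp(-H(z)) is a stationary solution of the Fokker–Planck equation ∂p/∂t = -Σ_i ∂_i(f_i p) + Σ_{i,j} ∂_i∂_j(D_ij p) associated to the SDE dz = f(z)dt + √(2D(z))dw. -/

import Mathlib

open Real

/-- Partial derivative of `f : (ι → ℝ) → ℝ` in coordinate `i` at `z`. -/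
noncomputable def pd {ι : Type*} [Fintype ι] [DecidableEq ι]
    (f : (ι → ℝ) → ℝ) (i : ι) (z : ι → ℝ) : ℝ :=
  fderiv ℝ f z (Pi.single i 1)

section aux
variable {ι : Type*} [Fintype ι] [DecidableEq ι]

lemma pd_congr (f g : (ι → ℝ) → ℝ) (h : ∀ w, f w = g w) (i : ι) (z : ι → ℝ) :
    pd f i z = pd g i z := by
  have : f = g := funext h
  rw [this]

lemma pd_add {f g : (ι → ℝ) → ℝ} {z : ι → ℝ}
    (hf : DifferentiableAt ℝ f z) (hg : DifferentiableAt ℝ g z) (i : ι) :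
    pd (fun w => f w + g w) i z = pd f i z + pd g i z := by
  simp [pd, fderiv_fun_add hf hg]

lemma pd_neg (f : (ι → ℝ) → ℝ) (i : ι) (z : ι → ℝ) :
    pd (fun w => -f w) i z = - pd f i z := by
  simp [pd, fderiv_neg]

lemma pd_mul {f g : (ι → ℝ) → ℝ} {z : ι → ℝ}
    (hf : DifferentiableAt ℝ f z) (hg : DifferentiableAt ℝ g z) (i : ι) :
    pd (fun w => f w * g w) i z = pd f i z * g z + f z * pd g i z := by
  simp [pd, fderiv_fun_mul hf hg]
  ring

lemma pd_sum {s : Finset ι} {F : ι → (ι → ℝ) → ℝ} {z : ι → ℝ}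
    (h : ∀ j ∈ s, DifferentiableAt ℝ (F j) z) (i : ι) :
    pd (fun w => ∑ j ∈ s, F j w) i z = ∑ j ∈ s, pd (F j) i z := by
  simp [pd, fderiv_fun_sum h]

lemma pd_smooth {g : (ι → ℝ) → ℝ} (hg : ContDiff ℝ (⊤ : ℕ∞) g) (j : ι) :
    ContDiff ℝ (⊤ : ℕ∞) (fun w => pd g j w) :=
  (hg.fderiv_right (by simp)).clm_apply contDiff_const

lemma pd_comm {g : (ι → ℝ) → ℝ} (hg : ContDiff ℝ (⊤ : ℕ∞) g) (i j : ι) (z : ι → ℝ) :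
    pd (fun w => pd g j w) i z = pd (fun w => pd g i w) j z := by
  have h1 : ∀ x, HasFDerivAt g (fderiv ℝ g x) x :=
    fun x => (hg.differentiable (by simp) x).hasFDerivAt
  have hC : ContDiff ℝ (⊤ : ℕ∞) (fderiv ℝ g) := hg.fderiv_right (by simp)
  have h2 : HasFDerivAt (fderiv ℝ g) (fderiv ℝ (fderiv ℝ g) z) z :=
    (hC.differentiable (by simp) z).hasFDerivAt
  have hsymm := second_derivative_symmetric h1 h2 (Pi.single i 1) (Pi.single j 1)
  have happ : ∀ k l : ι, pd (fun w => pd g k w) l z =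
      fderiv ℝ (fderiv ℝ g) z (Pi.single l 1) (Pi.single k 1) := by
    intro k l
    have hc := hC.differentiable (by simp) z
    have heq : fderiv ℝ (fun w => (fderiv ℝ g w) (Pi.single k (1:ℝ))) z =
        (fderiv ℝ g z).comp (fderiv ℝ (fun _ : ι → ℝ => Pi.single k (1:ℝ)) z) +
          (fderiv ℝ (fderiv ℝ g) z).flip (Pi.single k 1) :=
      fderiv_clm_apply hc (differentiableAt_const _)
    simp [pd, heq]
  rw [happ, happ, hsymm]

end aux

/-- **Stationarity of the complete recipe (Theorem 2.1).**
If `D` is a smooth positive semidefinite matrix field, `Q` a smooth skew-symmetric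
matrix field, `H` a smooth Hamiltonian, and the drift is
`f i z = -∑ j (D i j + Q i j) ∂_j H + τ i` with `τ i = ∑ j ∂_j (D i j + Q i j)`,
then `p_s ∝ exp (-H)` is a stationary solution of the Fokker–Planck equation
`∂p/∂t = -∑ i ∂_i (f_i p) + ∑ i j ∂_i ∂_j (D_ij p)`. -/
theorem recipe_stationarity {d : ℕ}
    (D Q : Fin d → Fin d → (Fin d → ℝ) → ℝ)
    (H : (Fin d → ℝ) → ℝ)
    (hD : ∀ i j, ContDiff ℝ (⊤ : ℕ∞) (D i j)) (hQ : ∀ i j, ContDiff ℝ (⊤ : ℕ∞) (Q i j))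
    (hH : ContDiff ℝ (⊤ : ℕ∞) H)
    (hDsymm : ∀ i j z, D i j z = D j i z)
    (hDpsd : ∀ (z : Fin d → ℝ) (v : Fin d → ℝ), 0 ≤ ∑ i, ∑ j, v i * D i j z * v j)
    (hQskew : ∀ i j z, Q i j z = - Q j i z)
    (f : Fin d → (Fin d → ℝ) → ℝ)
    (hf : ∀ i z, f i z =
      -(∑ j, (D i j z + Q i j z) * pd H j z) +
        ∑ j, pd (fun w => D i j w + Q i j w) j z)
    (c : ℝ) (hc : 0 < c)
    (ps : (Fin d → ℝ) → ℝ) (hps : ∀ z, ps z = c * Real.exp (-H z)) :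
    ∀ z, (-∑ i, pd (fun w => f i w * ps w) i z) +
        ∑ i, ∑ j, pd (fun w => pd (fun v => D i j v * ps v) j w) i z = 0 := by
  intro z
  have hpsfun : ps = fun w => c * Real.exp (-H w) := funext hps
  have hpsC : ContDiff ℝ (⊤ : ℕ∞) ps := by
    rw [hpsfun]; exact contDiff_const.mul (Real.contDiff_exp.comp hH.neg)
  -- derivative of ps
  have hpd_ps : ∀ (j : Fin d) (w : Fin d → ℝ), pd ps j w = -(pd H j w) * ps w := by
    intro j w
    have hdH : DifferentiableAt ℝ H w := hH.differentiable (by simp) w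
    have h1 : fderiv ℝ ps w = ps w • fderiv ℝ (fun v => -H v) w := by
      rw [hpsfun]
      rw [fderiv_const_mul (by exact (Real.contDiff_exp.comp hH.neg).differentiable (by simp) w : DifferentiableAt ℝ (fun v => Real.exp (-H v)) w)]
      rw [fderiv_exp (f := fun v => -H v) hdH.neg]
      rw [smul_smul]
    rw [pd, h1]
    simp [pd, fderiv_fun_neg]
    ring
  -- smoothness abbreviations
  have hDps : ∀ i j, ContDiff ℝ (⊤ : ℕ∞) (fun v => D i j v * ps v) := fun i j => (hD i j).mul hpsC
  have hQps : ∀ i j, ContDiff ℝ (⊤ : ℕ∞) (fun v => Q i j v * ps v) := fun i j => (hQ i j).mul hpsC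
  have hEps : ∀ i j, ContDiff ℝ (⊤ : ℕ∞) (fun v => (D i j v + Q i j v) * ps v) :=
    fun i j => ((hD i j).add (hQ i j)).mul hpsC
  -- Step A : pointwise identity for f i * ps
  have keyA : ∀ (i : Fin d) (w : Fin d → ℝ), f i w * ps w =
      ∑ j, pd (fun v => (D i j v + Q i j v) * ps v) j w := by
    intro i w
    have term : ∀ j : Fin d, pd (fun v => (D i j v + Q i j v) * ps v) j w =
        (pd (fun v => D i j v + Q i j v) j w - (D i j w + Q i j w) * pd H j w) * ps w := by
      intro j
      rw [pd_mul (((hD i j).add (hQ i j)).differentiable (by simp) w)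
          (hpsC.differentiable (by simp) w), hpd_ps]
      ring
    rw [Finset.sum_congr rfl (fun j _ => term j), ← Finset.sum_mul, hf,
      Finset.sum_sub_distrib]
    ring
  -- Step B : expand pd (f i * ps)
  have keyB : ∀ i : Fin d, pd (fun w => f i w * ps w) i z =
      (∑ j, pd (fun w => pd (fun v => D i j v * ps v) j w) i z) +
        ∑ j, pd (fun w => pd (fun v => Q i j v * ps v) j w) i z := by
    intro i
    rw [pd_congr _ _ (keyA i) i z]
    rw [pd_sum (fun j _ => (pd_smooth (hEps i j) j).differentiable (by simp) z) i]
    rw [← Finset.sum_add_distrib]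
    refine Finset.sum_congr rfl (fun j _ => ?_)
    have split : ∀ w, pd (fun v => (D i j v + Q i j v) * ps v) j w =
        pd (fun v => D i j v * ps v) j w + pd (fun v => Q i j v * ps v) j w := by
      intro w
      rw [pd_congr _ (fun v => D i j v * ps v + Q i j v * ps v) (fun v => by ring) j w]
      exact pd_add ((hDps i j).differentiable (by simp) w) ((hQps i j).differentiable (by simp) w) j
    rw [pd_congr _ _ split i z]
    exact pd_add ((pd_smooth (hDps i j) j).differentiable (by simp) z)
      ((pd_smooth (hQps i j) j).differentiable (by simp) z) i
  -- Step C : the Q-contribution vanishes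
  have keyC : (∑ i, ∑ j, pd (fun w => pd (fun v => Q i j v * ps v) j w) i z) = 0 := by
    set S := ∑ i, ∑ j, pd (fun w => pd (fun v => Q i j v * ps v) j w) i z with hS
    have hneg : S = -∑ i, ∑ j, pd (fun w => pd (fun v => Q j i v * ps v) j w) i z := by
      rw [hS, ← Finset.sum_neg_distrib]
      refine Finset.sum_congr rfl (fun i _ => ?_)
      rw [← Finset.sum_neg_distrib]
      refine Finset.sum_congr rfl (fun j _ => ?_)
      have e1 : ∀ w, pd (fun v => Q i j v * ps v) j w =
          - pd (fun v => Q j i v * ps v) j w := by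
        intro w
        rw [pd_congr _ (fun v => -(Q j i v * ps v)) (fun v => by rw [hQskew i j v]; ring) j w]
        exact pd_neg _ j w
      rw [pd_congr _ _ e1 i z]
      rw [pd_congr _ (fun w => -(fun w => pd (fun v => Q j i v * ps v) j w) w) (fun w => rfl) i z]
      exact pd_neg _ i z
    have hswap : (∑ i, ∑ j, pd (fun w => pd (fun v => Q j i v * ps v) j w) i z) = S := by
      rw [Finset.sum_comm]
      rw [hS]
      refine Finset.sum_congr rfl (fun i _ => Finset.sum_congr rfl (fun j _ => ?_))
      exact pd_comm (hQps i j) j i z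
    rw [hswap] at hneg
    linarith
  -- conclude
  have : (∑ i, pd (fun w => f i w * ps w) i z) =
      (∑ i, ∑ j, pd (fun w => pd (fun v => D i j v * ps v) j w) i z) +
        ∑ i, ∑ j, pd (fun w => pd (fun v => Q i j v * ps v) j w) i z := by
    rw [← Finset.sum_add_distrib]
    exact Finset.sum_congr rfl (fun i _ => keyB i)
  rw [this, keyC]
  ring
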